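/- Let (Ω, 𝓕) be a measurable space, let q and p be probability measures on (Ω, 𝓕), and let p₁, p₂ ∈ ℝ≥0 with p₁ + p₂ = 1. Then D_KL(p₁ • p + p₂ • q ‖ p) ≤ p₂ · D_KL(q ‖ p), where both sides take values in [0, ∞]. -/

import Mathlib

open MeasureTheory
open scoped ENNReal NNReal Classical

/-- Kullback–Leibler divergence, valued in `[0, ∞]`:
`D_KL(μ‖ν) = ∫ log(dμ/dν) dμ` when `μ ≪ ν` and the integrand is `μ`-integrable,
and `+∞` otherwise. -/
noncomputable def klDiv {Ω : Type*} [MeasurableSpace Ω] (μ ν : Measure Ω) : ℝ≥0∞ :=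
  if μ ≪ ν ∧ Integrable (fun ω => Real.log (μ.rnDeriv ν ω).toReal) μ then
    ENNReal.ofReal (∫ ω, Real.log (μ.rnDeriv ν ω).toReal ∂μ)
  else ⊤

/-!
For measures of equal total mass, `klDiv` is Mathlib's `InformationTheory.klDiv`, the
f-divergence `∫⁻ klFun (dμ/dν) dν` with `klFun x = x log x + 1 - x`. Since
`d(p₁ • p + p₂ • q)/dp = p₁ + p₂ · dq/dp` and `klFun` is convex with `klFun 1 = 0`, the integrand
for the mixture is pointwise at most `p₂` times the integrand for `q`.
-/

namespace MeasureTheory.Measure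

variable {α : Type*} {mα : MeasurableSpace α}

lemma rnDeriv_smul_self_add_smul (μ ν : Measure α) [SigmaFinite μ] [SigmaFinite ν] (a b : ℝ≥0) :
    (a • ν + b • μ).rnDeriv ν =ᵐ[ν] fun x ↦ a + b * μ.rnDeriv ν x := by
  filter_upwards [rnDeriv_add' (a • ν) (b • μ) ν, rnDeriv_smul_left' ν ν a,
    rnDeriv_smul_left' μ ν b, rnDeriv_self ν] with x hadd hν hμ hself
  rw [hadd, Pi.add_apply, hν, hμ, Pi.smul_apply, Pi.smul_apply, hself, ENNReal.smul_def,
    ENNReal.smul_def, smul_eq_mul, smul_eq_mul, mul_one]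

end MeasureTheory.Measure

namespace InformationTheory

lemma klFun_add_mul_le_mul_klFun {a b x : ℝ} (ha : 0 ≤ a) (hb : 0 ≤ b) (hab : a + b = 1)
    (hx : 0 ≤ x) : klFun (a + b * x) ≤ b * klFun x := by
  simpa [klFun_one] using convexOn_klFun.2 (Set.mem_Ici.2 zero_le_one) (Set.mem_Ici.2 hx) ha hb hab

variable {α : Type*} {mα : MeasurableSpace α}

lemma klDiv_smul_self_add_smul_le (μ ν : Measure α) [IsFiniteMeasure μ] [IsFiniteMeasure ν]
    {a b : ℝ≥0} (hab : a + b = 1) : klDiv (a • ν + b • μ) ν ≤ b * klDiv μ ν := by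
  rcases eq_or_ne b 0 with rfl | hb
  · obtain rfl : a = 1 := by simpa using hab
    simp
  by_cases hμν : μ ≪ ν
  swap
  · simp [hμν, ENNReal.mul_top (ENNReal.coe_ne_zero.2 hb)]
  have hmix : a • ν + b • μ ≪ ν :=
    Measure.AbsolutelyContinuous.add_left_iff.2
      ⟨Measure.AbsolutelyContinuous.rfl.smul_left a, hμν.smul_left b⟩
  rw [klDiv_eq_lintegral_klFun_of_ac hmix, klDiv_eq_lintegral_klFun_of_ac hμν,
    ← lintegral_const_mul' _ _ ENNReal.coe_ne_top]
  refine lintegral_mono_ae ?_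
  filter_upwards [Measure.rnDeriv_smul_self_add_smul μ ν a b, Measure.rnDeriv_ne_top μ ν]
    with x hx hfin
  rw [hx, ENNReal.toReal_add ENNReal.coe_ne_top (ENNReal.mul_ne_top ENNReal.coe_ne_top hfin),
    ENNReal.toReal_mul, ENNReal.coe_toReal, ENNReal.coe_toReal, ← ENNReal.ofReal_coe_nnreal,
    ← ENNReal.ofReal_mul b.coe_nonneg]
  exact ENNReal.ofReal_le_ofReal (klFun_add_mul_le_mul_klFun a.coe_nonneg b.coe_nonneg
    (by exact_mod_cast hab) ENNReal.toReal_nonneg)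

end InformationTheory

lemma klDiv_eq_informationTheory_klDiv {Ω : Type*} [MeasurableSpace Ω] {μ ν : Measure Ω}
    (h : μ Set.univ = ν Set.univ) : klDiv μ ν = InformationTheory.klDiv μ ν := by
  rw [klDiv, InformationTheory.klDiv_def, Measure.real, Measure.real, h, add_sub_cancel_right]
  rfl

/-- Part two of Proposition 1: when the first mixture component equals the
reference measure, `D_KL(p₁ • p + p₂ • q ‖ p) ≤ p₂ · D_KL(q ‖ p)`. -/
theorem klDiv_mixture_self_le {Ω : Type*} [MeasurableSpace Ω]
    (q p : Measure Ω) [IsProbabilityMeasure q] [IsProbabilityMeasure p]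
    (p₁ p₂ : ℝ≥0) (hp : p₁ + p₂ = 1) :
    klDiv (p₁ • p + p₂ • q) p ≤ p₂ * klDiv q p := by
  have hmix : (p₁ • p + p₂ • q) Set.univ = p Set.univ := by
    simp [← ENNReal.coe_add, hp]
  rw [klDiv_eq_informationTheory_klDiv hmix,
    klDiv_eq_informationTheory_klDiv (by simp : q Set.univ = p Set.univ)]
  exact InformationTheory.klDiv_smul_self_add_smul_le q p hp
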